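/- Let m ≥ 1, let L : ℝ^m × ℝ^m → ℝ, (q,v) ↦ L(q,v), be continuously differentiable, and let q, v, p : [t₀,t₁] → ℝ^m be C¹ curves. For C¹ variations δq, δv, δp : [t₀,t₁] → ℝ^m with δq(t₀) = δq(t₁) = 0, define the first variation δS := ∫_{t₀}^{t₁} [ (∂L/∂q)(q(t),v(t))·δq(t) + (∂L/∂v)(q(t),v(t))·δv(t) + δp(t)·(q̇(t) − v(t)) + p(t)·(δq̇(t) − δv(t)) ] dt. Then δS = 0 for all such variations if and only if on [t₀,t₁]: q̇ = v, p = (∂L/∂v)(q,v), and ṗ = (∂L/∂q)(q,v). -/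

import Mathlib

/-!
Since `δS` is linear in the variation, it suffices to vary one of `δq`, `δv`, `δp` at a time.
Varying `δp` and `δv` leaves the integrands `δp · (q̇ - v)` and `δv · (∂L/∂v - p)`; varying `δq`
and integrating `p · δq̇` by parts (the boundary term vanishes) leaves `δq · (∂L/∂q - ṗ)`. The
fundamental lemma of the calculus of variations turns each of these into a pointwise equation.
Conversely, under the implicit Euler–Lagrange equations the integrand of `δS` is the derivative
of `p · δq`, which vanishes at both endpoints.
-/

open MeasureTheory intervalIntegral Set
open scoped ContDiff

theorem eqOn_zero_of_forall_integral_mul_eq_zero {a b : ℝ} (hab : a < b) {f : ℝ → ℝ}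
    (hf : ContinuousOn f (Icc a b))
    (h : ∀ g : ℝ → ℝ, ContDiff ℝ ∞ g → HasCompactSupport g → tsupport g ⊆ Ioo a b →
      ∫ t in a..b, g t * f t = 0) :
    EqOn f 0 (Icc a b) := by
  have hae : ∀ᵐ t, t ∈ Ioo a b → f t = 0 := by
    refine isOpen_Ioo.ae_eq_zero_of_integral_contDiff_smul_eq_zero
      ((hf.mono Ioo_subset_Icc_self).locallyIntegrableOn measurableSet_Ioo)
      fun g hg hgc hgs => ?_
    have hvanish : ∀ t ∉ Ioc a b, g t • f t = 0 := fun t ht => by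
      rw [image_eq_zero_of_notMem_tsupport fun hg' => ht (Ioo_subset_Ioc_self (hgs hg')),
        zero_smul]
    rw [← setIntegral_eq_integral_of_forall_compl_eq_zero hvanish, ← integral_of_le hab.le]
    exact h g hg hgc hgs
  refine Measure.eqOn_Icc_of_ae_eq volume hab.ne ?_ hf continuousOn_const
  rw [Measure.restrict_congr_set Ioo_ae_eq_Icc.symm]
  exact (ae_restrict_iff' measurableSet_Ioo).2 hae

section

variable {ι : Type*} [Fintype ι]

theorem eqOn_zero_of_forall_integral_sum_mul_eq_zero {a b : ℝ} (hab : a < b) {F : ℝ → ι → ℝ}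
    (hF : ContinuousOn F (Icc a b))
    (h : ∀ φ : ℝ → ι → ℝ, ContDiffOn ℝ 1 φ (Icc a b) → φ a = 0 → φ b = 0 →
      ∫ t in a..b, ∑ i, φ t i * F t i = 0) :
    EqOn F 0 (Icc a b) := by
  classical
  intro t ht
  funext i
  refine eqOn_zero_of_forall_integral_mul_eq_zero hab (continuousOn_pi.1 hF i)
    (fun g hg _ hgs => ?_) ht
  have hg_ends : ∀ s ∉ Ioo a b, g s = 0 := fun s hs =>
    image_eq_zero_of_notMem_tsupport fun hs' => hs (hgs hs')
  have := h (fun s => g s • Pi.single i 1)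
    (((hg.of_le (by exact_mod_cast le_top)).contDiffOn).smul contDiffOn_const)
    (by simp [hg_ends a (by simp)]) (by simp [hg_ends b (by simp)])
  simpa [Pi.single_apply] using this

theorem integral_sum_derivWithin_mul_add_mul_derivWithin_eq_zero {a b : ℝ} (hab : a < b)
    {p x : ℝ → ι → ℝ} (hp : ContDiffOn ℝ 1 p (Icc a b)) (hx : ContDiffOn ℝ 1 x (Icc a b))
    (ha : x a = 0) (hb : x b = 0) :
    ∫ t in a..b, ∑ i, (derivWithin p (Icc a b) t i * x t i + p t i * derivWithin x (Icc a b) t i)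
      = 0 := by
  set G : ℝ → ℝ := fun t => ∑ i, p t i * x t i
  have hG : ContDiffOn ℝ 1 G (Icc a b) :=
    ContDiffOn.sum fun i _ => (contDiffOn_pi.1 hp i).mul (contDiffOn_pi.1 hx i)
  have hG' : EqOn (derivWithin G (Icc a b))
      (fun t => ∑ i, (derivWithin p (Icc a b) t i * x t i + p t i * derivWithin x (Icc a b) t i))
      (uIcc a b) := by
    intro t ht
    rw [uIcc_of_le hab.le] at ht
    have hderiv {y : ℝ → ι → ℝ} (hy : ContDiffOn ℝ 1 y (Icc a b)) (i : ι) :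
        HasDerivWithinAt (fun s => y s i) (derivWithin y (Icc a b) t i) (Icc a b) t :=
      hasDerivWithinAt_pi.1 (hy.differentiableOn one_ne_zero t ht).hasDerivWithinAt i
    exact (HasDerivWithinAt.fun_sum fun i _ => (hderiv hp i).mul (hderiv hx i)).derivWithin
      (uniqueDiffOn_Icc hab t ht)
  rw [← integral_congr hG', integral_derivWithin_Icc_of_contDiffOn_Icc hG hab.le]
  simp [G, ha, hb]

noncomputable def actionVariation (L : (ι → ℝ) × (ι → ℝ) → ℝ) (t₀ t₁ : ℝ)
    (q v p δq δv δp : ℝ → ι → ℝ) : ℝ :=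
  ∫ t in t₀..t₁,
    (fderiv ℝ L (q t, v t) (δq t, 0) + fderiv ℝ L (q t, v t) (0, δv t)
      + ∑ i, δp t i * (derivWithin q (Icc t₀ t₁) t i - v t i)
      + ∑ i, p t i * (derivWithin δq (Icc t₀ t₁) t i - δv t i))

variable {L : (ι → ℝ) × (ι → ℝ) → ℝ} {t₀ t₁ : ℝ} {q v p : ℝ → ι → ℝ}

theorem actionVariation_momentum (φ : ℝ → ι → ℝ) :
    actionVariation L t₀ t₁ q v p 0 0 φ
      = ∫ t in t₀..t₁, ∑ i, φ t i * (derivWithin q (Icc t₀ t₁) - v) t i := by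
  simp [actionVariation, Prod.mk_zero_zero]

end

section

variable {ι : Type*} [Fintype ι] [DecidableEq ι]

theorem ContinuousLinearMap.apply_eq_sum_mul_apply_single (T : (ι → ℝ) →L[ℝ] ℝ) (w : ι → ℝ) :
    T w = ∑ i, w i * T (Pi.single i 1) := by
  conv_lhs => rw [← Finset.univ_sum_single w]
  rw [map_sum]
  refine Finset.sum_congr rfl fun i _ => ?_
  rw [← smul_eq_mul, ← map_smul, ← Pi.single_smul', smul_eq_mul, mul_one]

/-- `gradFst L (q, v) = ∂L/∂q` and `gradSnd L (q, v) = ∂L/∂v`, as coordinate vectors. -/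
noncomputable def gradFst (L : (ι → ℝ) × (ι → ℝ) → ℝ) (x : (ι → ℝ) × (ι → ℝ)) (i : ι) : ℝ :=
  fderiv ℝ L x (Pi.single i 1, 0)

noncomputable def gradSnd (L : (ι → ℝ) × (ι → ℝ) → ℝ) (x : (ι → ℝ) × (ι → ℝ)) (i : ι) : ℝ :=
  fderiv ℝ L x (0, Pi.single i 1)

theorem fderiv_apply_inl_eq_sum (L : (ι → ℝ) × (ι → ℝ) → ℝ) (x : (ι → ℝ) × (ι → ℝ)) (w : ι → ℝ) :
    fderiv ℝ L x (w, 0) = ∑ i, w i * gradFst L x i :=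
  ((fderiv ℝ L x).comp (ContinuousLinearMap.inl ℝ _ _)).apply_eq_sum_mul_apply_single w

theorem fderiv_apply_inr_eq_sum (L : (ι → ℝ) × (ι → ℝ) → ℝ) (x : (ι → ℝ) × (ι → ℝ)) (w : ι → ℝ) :
    fderiv ℝ L x (0, w) = ∑ i, w i * gradSnd L x i :=
  ((fderiv ℝ L x).comp (ContinuousLinearMap.inr ℝ _ _)).apply_eq_sum_mul_apply_single w

variable {L : (ι → ℝ) × (ι → ℝ) → ℝ} {t₀ t₁ : ℝ} {q v p : ℝ → ι → ℝ}

theorem continuous_gradFst (hL : ContDiff ℝ 1 L) : Continuous (gradFst L) :=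
  continuous_pi fun _ => (hL.continuous_fderiv one_ne_zero).clm_apply continuous_const

theorem continuous_gradSnd (hL : ContDiff ℝ 1 L) : Continuous (gradSnd L) :=
  continuous_pi fun _ => (hL.continuous_fderiv one_ne_zero).clm_apply continuous_const

theorem actionVariation_velocity (φ : ℝ → ι → ℝ) :
    actionVariation L t₀ t₁ q v p 0 φ 0
      = ∫ t in t₀..t₁, ∑ i, φ t i * (gradSnd L (q t, v t) - p t) i := by
  rw [actionVariation]
  refine integral_congr fun t _ => ?_
  simp only [Pi.zero_apply, Prod.mk_zero_zero, map_zero, fderiv_apply_inr_eq_sum, zero_add,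
    mul_sub, zero_mul, mul_comm, mul_zero, sub_self, Finset.sum_const_zero, add_zero,
    derivWithin_zero, zero_sub, mul_neg, Finset.sum_neg_distrib, Pi.sub_apply,
    Finset.sum_sub_distrib]
  ring

theorem actionVariation_position (hab : t₀ < t₁) (hL : ContDiff ℝ 1 L)
    (hq : ContinuousOn q (Icc t₀ t₁)) (hv : ContinuousOn v (Icc t₀ t₁))
    (hp : ContDiffOn ℝ 1 p (Icc t₀ t₁)) {φ : ℝ → ι → ℝ} (hφ : ContDiffOn ℝ 1 φ (Icc t₀ t₁))
    (h₀ : φ t₀ = 0) (h₁ : φ t₁ = 0) :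
    actionVariation L t₀ t₁ q v p φ 0 0
      = ∫ t in t₀..t₁, ∑ i, φ t i * (gradFst L (q t, v t) - derivWithin p (Icc t₀ t₁) t) i := by
  have hgrad : ContinuousOn (fun t => gradFst L (q t, v t)) (Icc t₀ t₁) :=
    (continuous_gradFst hL).comp_continuousOn (hq.prodMk hv)
  have hp' := hp.continuousOn_derivWithin (uniqueDiffOn_Icc hab) le_rfl
  have hφ' := hφ.continuousOn_derivWithin (uniqueDiffOn_Icc hab) le_rfl
  rw [← add_zero (∫ t in t₀..t₁, _),
    ← integral_sum_derivWithin_mul_add_mul_derivWithin_eq_zero hab hp hφ h₀ h₁,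
    ← intervalIntegral.integral_add]
  · rw [actionVariation]
    refine integral_congr fun t _ => ?_
    simp only [fderiv_apply_inl_eq_sum, Pi.zero_apply, zero_mul, Finset.sum_const_zero, add_zero,
      sub_zero, ← Finset.sum_add_distrib, Pi.sub_apply]
    exact Finset.sum_congr rfl fun i _ => by ring
  all_goals
    refine ContinuousOn.intervalIntegrable_of_Icc hab.le (continuousOn_finsetSum _ fun i _ => ?_)
  · exact (continuousOn_pi.1 hφ.continuousOn i).mul
      ((continuousOn_pi.1 hgrad i).sub (continuousOn_pi.1 hp' i))
  · exact ((continuousOn_pi.1 hp' i).mul (continuousOn_pi.1 hφ.continuousOn i)).add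
      ((continuousOn_pi.1 hp.continuousOn i).mul (continuousOn_pi.1 hφ' i))

theorem actionVariation_eq_zero (hab : t₀ < t₁) (hp : ContDiffOn ℝ 1 p (Icc t₀ t₁))
    {δq δv δp : ℝ → ι → ℝ} (hδq : ContDiffOn ℝ 1 δq (Icc t₀ t₁)) (h₀ : δq t₀ = 0) (h₁ : δq t₁ = 0)
    (hq_eq : ∀ t ∈ Icc t₀ t₁, derivWithin q (Icc t₀ t₁) t = v t)
    (hp_eq : ∀ t ∈ Icc t₀ t₁, p t = gradSnd L (q t, v t))
    (hp_deriv : ∀ t ∈ Icc t₀ t₁, derivWithin p (Icc t₀ t₁) t = gradFst L (q t, v t)) :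
    actionVariation L t₀ t₁ q v p δq δv δp = 0 := by
  rw [actionVariation, ← integral_sum_derivWithin_mul_add_mul_derivWithin_eq_zero hab hp hδq h₀ h₁]
  refine integral_congr fun t ht => ?_
  rw [uIcc_of_le hab.le] at ht
  simp only [fderiv_apply_inl_eq_sum, fderiv_apply_inr_eq_sum, hq_eq t ht, ← hp_eq t ht,
    ← hp_deriv t ht, sub_self, mul_zero, Finset.sum_const_zero, add_zero,
    ← Finset.sum_add_distrib]
  exact Finset.sum_congr rfl fun i _ => by ring

end

theorem hamilton_pontryagin_mechanics_general
    (m : ℕ) (t₀ t₁ : ℝ) (ht : t₀ < t₁)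
    (L : (Fin m → ℝ) × (Fin m → ℝ) → ℝ) (hL : ContDiff ℝ 1 L)
    (q v p : ℝ → Fin m → ℝ)
    (hq : ContDiffOn ℝ 1 q (Set.Icc t₀ t₁)) (hv : ContDiffOn ℝ 1 v (Set.Icc t₀ t₁))
    (hp : ContDiffOn ℝ 1 p (Set.Icc t₀ t₁)) :
    (∀ δq δv δp : ℝ → Fin m → ℝ,
      ContDiffOn ℝ 1 δq (Set.Icc t₀ t₁) → ContDiffOn ℝ 1 δv (Set.Icc t₀ t₁) →
      ContDiffOn ℝ 1 δp (Set.Icc t₀ t₁) → δq t₀ = 0 → δq t₁ = 0 →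
      (∫ t in t₀..t₁,
        (fderiv ℝ L (q t, v t) (δq t, 0)
         + fderiv ℝ L (q t, v t) (0, δv t)
         + ∑ i : Fin m, δp t i * (derivWithin q (Set.Icc t₀ t₁) t i - v t i)
         + ∑ i : Fin m, p t i * (derivWithin δq (Set.Icc t₀ t₁) t i - δv t i))) = 0)
    ↔ (∀ t ∈ Set.Icc t₀ t₁,
        derivWithin q (Set.Icc t₀ t₁) t = v t
        ∧ (∀ i : Fin m, p t i = fderiv ℝ L (q t, v t) (0, Pi.single i 1))
        ∧ (∀ i : Fin m, derivWithin p (Set.Icc t₀ t₁) t i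
            = fderiv ℝ L (q t, v t) (Pi.single i 1, 0))) := by
  have hqv : ContinuousOn (fun t => (q t, v t)) (Icc t₀ t₁) :=
    hq.continuousOn.prodMk hv.continuousOn
  constructor
  · intro H t htI
    have hvel : EqOn (derivWithin q (Icc t₀ t₁) - v) 0 (Icc t₀ t₁) :=
      eqOn_zero_of_forall_integral_sum_mul_eq_zero ht
        ((hq.continuousOn_derivWithin (uniqueDiffOn_Icc ht) le_rfl).sub hv.continuousOn)
        fun φ hφ _ _ => (actionVariation_momentum φ).symm.trans
          (H 0 0 φ contDiffOn_const contDiffOn_const hφ rfl rfl)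
    have hmom : EqOn (fun t => gradSnd L (q t, v t) - p t) 0 (Icc t₀ t₁) :=
      eqOn_zero_of_forall_integral_sum_mul_eq_zero ht
        (((continuous_gradSnd hL).comp_continuousOn hqv).sub hp.continuousOn)
        fun φ hφ _ _ => (actionVariation_velocity φ).symm.trans
          (H 0 φ 0 contDiffOn_const hφ contDiffOn_const rfl rfl)
    have hforce : EqOn (fun t => gradFst L (q t, v t) - derivWithin p (Icc t₀ t₁) t) 0
        (Icc t₀ t₁) :=
      eqOn_zero_of_forall_integral_sum_mul_eq_zero ht
        (((continuous_gradFst hL).comp_continuousOn hqv).sub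
          (hp.continuousOn_derivWithin (uniqueDiffOn_Icc ht) le_rfl))
        fun φ hφ h₀ h₁ =>
          (actionVariation_position ht hL hq.continuousOn hv.continuousOn hp hφ h₀ h₁).symm.trans
            (H φ 0 0 hφ contDiffOn_const contDiffOn_const h₀ h₁)
    exact ⟨sub_eq_zero.1 (hvel htI), fun i => (sub_eq_zero.1 (congrFun (hmom htI) i)).symm,
      fun i => (sub_eq_zero.1 (congrFun (hforce htI) i)).symm⟩
  · intro hEL δq δv δp hδq _ _ h₀ h₁
    exact actionVariation_eq_zero ht hp hδq h₀ h₁ (fun t htI => (hEL t htI).1)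
      (fun t htI => funext (hEL t htI).2.1) (fun t htI => funext (hEL t htI).2.2)

theorem hamilton_pontryagin_mechanics
    (m : ℕ) (hm : 1 ≤ m) (t₀ t₁ : ℝ) (ht : t₀ < t₁)
    (L : (Fin m → ℝ) × (Fin m → ℝ) → ℝ) (hL : ContDiff ℝ 1 L)
    (q v p : ℝ → Fin m → ℝ)
    (hq : ContDiffOn ℝ 1 q (Set.Icc t₀ t₁)) (hv : ContDiffOn ℝ 1 v (Set.Icc t₀ t₁))
    (hp : ContDiffOn ℝ 1 p (Set.Icc t₀ t₁)) :
    (∀ δq δv δp : ℝ → Fin m → ℝ,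
      ContDiffOn ℝ 1 δq (Set.Icc t₀ t₁) → ContDiffOn ℝ 1 δv (Set.Icc t₀ t₁) →
      ContDiffOn ℝ 1 δp (Set.Icc t₀ t₁) → δq t₀ = 0 → δq t₁ = 0 →
      (∫ t in t₀..t₁,
        (fderiv ℝ L (q t, v t) (δq t, 0)
         + fderiv ℝ L (q t, v t) (0, δv t)
         + ∑ i : Fin m, δp t i * (derivWithin q (Set.Icc t₀ t₁) t i - v t i)
         + ∑ i : Fin m, p t i * (derivWithin δq (Set.Icc t₀ t₁) t i - δv t i))) = 0)
    ↔ (∀ t ∈ Set.Icc t₀ t₁,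
        derivWithin q (Set.Icc t₀ t₁) t = v t
        ∧ (∀ i : Fin m, p t i = fderiv ℝ L (q t, v t) (0, Pi.single i 1))
        ∧ (∀ i : Fin m, derivWithin p (Set.Icc t₀ t₁) t i
            = fderiv ℝ L (q t, v t) (Pi.single i 1, 0))) :=
  hamilton_pontryagin_mechanics_general m t₀ t₁ ht L hL q v p hq hv hp
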